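/- arXiv:2105.08698 — 6 statements merged into one kernel-verified Lean document; each statement's English description precedes it below -/
import Mathlib

section
/- Let Γ be a countable group acting freely on a measure space (X, μ) by measurable, measure-preserving bijections, let F be a measurable strict fundamental domain with μ(F) < ∞, and let χ : X → Γ be the associated retract, assumed measurable. Let Λ be a group acting on X on the right (written x · λ) by measurable, measure-preserving bijections with measurable inverses, commuting with the Γ-action: γ • (x · λ) = (γ • x) · λ. Let c : Γ^{n+1} → ℝ be bounded and Γ-invariant: c(γγ₀,…,γγ_n) = c(γ₀,…,γ_n). Define the transfer cochain Tc : Λ^{n+1} → ℝ by Tc(λ₀,…,λ_n) = ∫_F c(χ(x·λ₀),…,χ(x·λ_n)) dμ(x). Then Tc is Λ-invariant: Tc(λλ₀,…,λλ_n) = Tc(λ₀,…,λ_n) for all λ, λ₀,…,λ_n ∈ Λ. -/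
/-!
Right translation by `λ` maps the fundamental domain `F` onto another fundamental domain, because
it commutes with the `Γ`-action and preserves `μ`. The integrand `x ↦ c(χ(x·λ₀),…,χ(x·λ_n))` is
`Γ`-invariant, since `χ` is equivariant and `c` is invariant, and integrals of invariant functions
agree over any two fundamental domains.
-/

namespace MeasureTheory

variable {G α : Type*} [Group G] [MulAction G α]

theorem existsUnique_smul_mem_of_existsUnique_mem_orbit
    (hfree : ∀ (g : G) (x : α), g • x = x → g = 1) {s : Set α}
    (hs : ∀ x : α, ∃! y : α, y ∈ s ∧ ∃ g : G, g • x = y) (x : α) :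
    ∃! g : G, g • x ∈ s := by
  obtain ⟨_, ⟨hy, g, rfl⟩, huniq⟩ := hs x
  refine ⟨g, hy, fun h hh => ?_⟩
  have hgh : h • x = g • x := huniq _ ⟨hh, h, rfl⟩
  have : (g⁻¹ * h) • x = x := by rw [mul_smul, hgh, inv_smul_smul]
  exact (inv_mul_eq_one.mp (hfree _ _ this)).symm

theorem isFundamentalDomain_of_existsUnique_mem_orbit [MeasurableSpace α] {μ : Measure α}
    (hfree : ∀ (g : G) (x : α), g • x = x → g = 1) {s : Set α} (hmeas : NullMeasurableSet s μ)
    (hs : ∀ x : α, ∃! y : α, y ∈ s ∧ ∃ g : G, g • x = y) :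
    IsFundamentalDomain G s μ :=
  .mk' hmeas (existsUnique_smul_mem_of_existsUnique_mem_orbit hfree hs)

theorem IsFundamentalDomain.setIntegral_comp_eq_of_smul_comm [Countable G] [MeasurableSpace α]
    [MeasurableConstSMul G α] {μ : Measure α} [SMulInvariantMeasure G α μ]
    {E : Type*} [NormedAddCommGroup E] [NormedSpace ℝ E] {s : Set α}
    (hs : IsFundamentalDomain G s μ) (e : α ≃ᵐ α) (he : MeasurePreserving e μ μ)
    (hcomm : ∀ (g : G) (x : α), e (g • x) = g • e x) {f : α → E}
    (hf : ∀ (g : G) (x : α), f (g • x) = f x) :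
    ∫ x in s, f (e x) ∂μ = ∫ x in s, f x ∂μ := by
  have hes : IsFundamentalDomain G (e '' s) μ :=
    hs.image_of_equiv e.toEquiv he.symm.quasiMeasurePreserving (Equiv.refl G) hcomm
  calc ∫ x in s, f (e x) ∂μ = ∫ y in e '' s, f y ∂μ :=
        (he.setIntegral_image_emb e.measurableEmbedding f s).symm
    _ = ∫ x in s, f x ∂μ := hes.setIntegral_eq hs hf

end MeasureTheory

open MeasureTheory

theorem stmt10_general {Γ Λ X : Type*} [Group Γ] [Countable Γ]
    [Group Λ] [MulAction Γ X] [MeasurableSpace X] (μ : Measure X)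
    (hΓpres : ∀ γ : Γ, MeasurePreserving (fun x : X => γ • x) μ μ)
    (hfree : ∀ (γ : Γ) (x : X), γ • x = x → γ = 1)
    (F : Set X) (hFmeas : MeasurableSet F)
    (hF : ∀ x : X, ∃! y : X, y ∈ F ∧ ∃ γ : Γ, γ • x = y)
    (χ : X → Γ)
    (hχeq : ∀ (γ : Γ) (x : X), χ (γ • x) = γ * χ x)
    (act : X → Λ → X)
    (h_one : ∀ x : X, act x 1 = x)
    (h_mul : ∀ (x : X) (l m : Λ), act x (l * m) = act (act x l) m)
    (hactpres : ∀ l : Λ, MeasurePreserving (fun x : X => act x l) μ μ)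
    (hcomm : ∀ (γ : Γ) (x : X) (l : Λ), act (γ • x) l = γ • act x l)
    (n : ℕ) (c : (Fin (n + 1) → Γ) → ℝ)
    (hcinv : ∀ (γ : Γ) (f : Fin (n + 1) → Γ), c (fun j => γ * f j) = c f) :
    ∀ (l : Λ) (f : Fin (n + 1) → Λ),
      ∫ x in F, c (fun j => χ (act x (l * f j))) ∂μ =
        ∫ x in F, c (fun j => χ (act x (f j))) ∂μ := by
  intro l f
  have : MeasurableConstSMul Γ X := ⟨fun γ => (hΓpres γ).measurable⟩
  have : SMulInvariantMeasure Γ X μ :=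
    ⟨fun γ _ hs => (hΓpres γ).measure_preimage hs.nullMeasurableSet⟩
  let e : X ≃ᵐ X :=
    { toFun := fun x => act x l
      invFun := fun x => act x l⁻¹
      left_inv x := by simp only [← h_mul, mul_inv_cancel, h_one]
      right_inv x := by simp only [← h_mul, inv_mul_cancel, h_one]
      measurable_toFun := (hactpres l).measurable
      measurable_invFun := (hactpres l⁻¹).measurable }
  let φ : X → ℝ := fun x => c fun j => χ (act x (f j))
  have hφ : ∀ (γ : Γ) (x : X), φ (γ • x) = φ x := fun γ x => by simp only [φ, hcomm, hχeq, hcinv]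
  have hFdom : IsFundamentalDomain Γ F μ :=
    isFundamentalDomain_of_existsUnique_mem_orbit hfree hFmeas.nullMeasurableSet hF
  simp only [h_mul]
  exact hFdom.setIntegral_comp_eq_of_smul_comm e (hactpres l) (fun γ x => hcomm γ x l) hφ

/-- the transfer cochain
`Tc(λ₀,…,λ_n) = ∫_F c(χ(x·λ₀),…,χ(x·λ_n)) dμ(x)` of a bounded `Γ`-invariant cochain
`c : Γ^{n+1} → ℝ` is `Λ`-invariant: `Tc(λλ₀,…,λλ_n) = Tc(λ₀,…,λ_n)`. -/
theorem stmt10 {Γ Λ X : Type*} [Group Γ] [Countable Γ]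
    [MeasurableSpace Γ] [MeasurableSingletonClass Γ]
    [Group Λ] [MulAction Γ X] [MeasurableSpace X] (μ : Measure X)
    (hΓmeas : ∀ γ : Γ, Measurable fun x : X => γ • x)
    (hΓpres : ∀ γ : Γ, MeasurePreserving (fun x : X => γ • x) μ μ)
    (hfree : ∀ (γ : Γ) (x : X), γ • x = x → γ = 1)
    (F : Set X) (hFmeas : MeasurableSet F) (hFfin : μ F < ⊤)
    (hF : ∀ x : X, ∃! y : X, y ∈ F ∧ ∃ γ : Γ, γ • x = y)
    (χ : X → Γ) (hχmeas : Measurable χ)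
    (hχeq : ∀ (γ : Γ) (x : X), χ (γ • x) = γ * χ x) (hχF : ∀ y ∈ F, χ y = 1)
    (act : X → Λ → X)
    (h_one : ∀ x : X, act x 1 = x)
    (h_mul : ∀ (x : X) (l m : Λ), act x (l * m) = act (act x l) m)
    (hactmeas : ∀ l : Λ, Measurable fun x : X => act x l)
    (hactpres : ∀ l : Λ, MeasurePreserving (fun x : X => act x l) μ μ)
    (hcomm : ∀ (γ : Γ) (x : X) (l : Λ), act (γ • x) l = γ • act x l)
    (n : ℕ) (c : (Fin (n + 1) → Γ) → ℝ)
    (C : ℝ) (hc : ∀ f : Fin (n + 1) → Γ, |c f| ≤ C)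
    (hcinv : ∀ (γ : Γ) (f : Fin (n + 1) → Γ), c (fun j => γ * f j) = c f) :
    ∀ (l : Λ) (f : Fin (n + 1) → Λ),
      ∫ x in F, c (fun j => χ (act x (l * f j))) ∂μ =
        ∫ x in F, c (fun j => χ (act x (f j))) ∂μ :=
  stmt10_general μ hΓpres hfree F hFmeas hF χ hχeq act h_one h_mul hactpres hcomm n c hcinv
end

section
/- Let Γ be a countable group acting freely on a measure space (X, μ) by measurable, measure-preserving bijections, let F be a measurable strict fundamental domain with μ(F) < ∞, χ : X → Γ its measurable retract, and let Λ be a group acting on X on the right by measurable bijections commuting with the Γ-action. For bounded c : Γ^{m} → ℝ define Tc : Λ^{m} → ℝ by Tc(λ₀,…,λ_{m−1}) = ∫_F c(χ(x·λ₀),…,χ(x·λ_{m−1})) dμ(x). Then: (1) |Tc(λ₀,…,λ_{m−1})| ≤ μ(F) · sup|c| for all tuples; and (2) T commutes with the homogeneous codifferential: T(δc) = δ(Tc) for every bounded c : Γ^m → ℝ, m ≥ 1. -/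
/-! The integrand `x ↦ c(χ(x·λ₀),…,χ(x·λₘ))` is measurable (any `c` is, its domain being
countable and discrete) and bounded by `sup|c|` on a set of finite measure. So (1) is the trivial
estimate of the integral, and (2) is linearity of the integral, `δ` being a finite signed sum of
restrictions of the cochain. -/

open MeasureTheory

/-- The homogeneous codifferential on real-valued cochains:
`δc(g₀,…,g_m) = Σᵢ (−1)^i c(g₀,…,ĝᵢ,…,g_m)`. -/
def delta {G : Type*} {m : ℕ} (c : (Fin m → G) → ℝ) : (Fin (m + 1) → G) → ℝ :=
  fun f => ∑ i : Fin (m + 1), (-1 : ℝ) ^ (i : ℕ) * c (f ∘ i.succAbove)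

/-- The transfer cochain `Tc(λ₀,…,λ_{m−1}) = ∫_F c(χ(x·λ₀),…,χ(x·λ_{m−1})) dμ(x)`. -/
noncomputable def transfer {Γ Λ X : Type*} [MeasurableSpace X] (μ : Measure X)
    (F : Set X) (χ : X → Γ) (act : X → Λ → X) {m : ℕ}
    (c : (Fin m → Γ) → ℝ) : (Fin m → Λ) → ℝ :=
  fun f => ∫ x in F, c (fun j => χ (act x (f j))) ∂μ

theorem integral_delta {G α : Type*} [MeasurableSpace α] {μ : Measure α} {m : ℕ}
    (c : α → (Fin m → G) → ℝ) (hc : ∀ g, Integrable (fun x => c x g) μ)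
    (f : Fin (m + 1) → G) :
    ∫ x, delta (c x) f ∂μ = delta (fun g => ∫ x, c x g ∂μ) f := by
  simp only [delta]
  rw [integral_finsetSum _ fun i _ => (hc _).const_mul _]
  simp only [integral_const_mul]

section Transfer

variable {Γ Λ X : Type*} [MeasurableSpace X] {μ : Measure X} {F : Set X} {χ : X → Γ}
  {act : X → Λ → X} {m : ℕ}

theorem abs_transfer_le (hF : μ F < ⊤) {c : (Fin m → Γ) → ℝ} {M : ℝ} (hc : ∀ g, |c g| ≤ M)
    (f : Fin m → Λ) :
    |transfer μ F χ act c f| ≤ (μ F).toReal * M := by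
  rw [mul_comm, ← measureReal_def]
  exact norm_setIntegral_le_of_norm_le_const hF fun x _ => (Real.norm_eq_abs _).trans_le (hc _)

variable [Countable Γ] [MeasurableSpace Γ] [MeasurableSingletonClass Γ]

theorem measurable_transfer_integrand (hχ : Measurable χ)
    (hact : ∀ l, Measurable fun x => act x l) (c : (Fin m → Γ) → ℝ) (f : Fin m → Λ) :
    Measurable fun x => c fun j => χ (act x (f j)) :=
  (measurable_of_countable c).comp (measurable_pi_lambda _ fun j => hχ.comp (hact (f j)))

theorem transfer_delta (hF : μ F < ⊤) (hχ : Measurable χ)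
    (hact : ∀ l, Measurable fun x => act x l) (c : (Fin m → Γ) → ℝ)
    (hc : BddAbove (Set.range fun g => |c g|)) :
    transfer μ F χ act (delta c) = delta (transfer μ F χ act c) := by
  obtain ⟨M, hM⟩ := hc
  funext f
  -- `δ` commutes with precomposition by `g ↦ χ ∘ act x ∘ g`, so this is `integral_delta` by `rfl`.
  refine integral_delta (fun x g => c fun j => χ (act x (g j))) (fun g => ?_) f
  exact Measure.integrableOn_of_bounded hF.ne
    (measurable_transfer_integrand hχ hact c g).aestronglyMeasurable
    (M := M) (ae_of_all _ fun x => hM ⟨_, rfl⟩)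

end Transfer

theorem stmt11_general {Γ Λ X : Type*} [Countable Γ]
    [MeasurableSpace Γ] [MeasurableSingletonClass Γ]
    [MeasurableSpace X] (μ : Measure X)
    (F : Set X) (hFfin : μ F < ⊤)
    (χ : X → Γ) (hχmeas : Measurable χ)
    (act : X → Λ → X)
    (hactmeas : ∀ l : Λ, Measurable fun x : X => act x l)
    (n : ℕ) (c : (Fin (n + 1) → Γ) → ℝ)
    (hcbdd : BddAbove (Set.range fun f : Fin (n + 1) → Γ => |c f|)) :
    (∀ f : Fin (n + 1) → Λ,
      |transfer μ F χ act c f| ≤ (μ F).toReal * ⨆ f' : Fin (n + 1) → Γ, |c f'|) ∧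
    transfer μ F χ act (delta c) = delta (transfer μ F χ act c) :=
  ⟨abs_transfer_le hFfin fun g => le_ciSup hcbdd g,
    transfer_delta hFfin hχmeas hactmeas c hcbdd⟩

/-- (1) the transfer cochain of a bounded cochain satisfies
`|Tc(λ₀,…,λ_{m−1})| ≤ μ(F) · sup|c|`, and (2) the transfer commutes with the
homogeneous codifferential: `T(δc) = δ(Tc)` (here `m = n + 1 ≥ 1`). -/
theorem stmt11 {Γ Λ X : Type*} [Group Γ] [Countable Γ]
    [MeasurableSpace Γ] [MeasurableSingletonClass Γ]
    [Group Λ] [MulAction Γ X] [MeasurableSpace X] (μ : Measure X)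
    (hΓmeas : ∀ γ : Γ, Measurable fun x : X => γ • x)
    (hΓpres : ∀ γ : Γ, MeasurePreserving (fun x : X => γ • x) μ μ)
    (hfree : ∀ (γ : Γ) (x : X), γ • x = x → γ = 1)
    (F : Set X) (hFmeas : MeasurableSet F) (hFfin : μ F < ⊤)
    (hF : ∀ x : X, ∃! y : X, y ∈ F ∧ ∃ γ : Γ, γ • x = y)
    (χ : X → Γ) (hχmeas : Measurable χ)
    (hχeq : ∀ (γ : Γ) (x : X), χ (γ • x) = γ * χ x) (hχF : ∀ y ∈ F, χ y = 1)
    (act : X → Λ → X)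
    (h_one : ∀ x : X, act x 1 = x)
    (h_mul : ∀ (x : X) (l m : Λ), act x (l * m) = act (act x l) m)
    (hactmeas : ∀ l : Λ, Measurable fun x : X => act x l)
    (hcomm : ∀ (γ : Γ) (x : X) (l : Λ), act (γ • x) l = γ • act x l)
    (n : ℕ) (c : (Fin (n + 1) → Γ) → ℝ)
    (hcbdd : BddAbove (Set.range fun f : Fin (n + 1) → Γ => |c f|)) :
    (∀ f : Fin (n + 1) → Λ,
      |transfer μ F χ act c f| ≤ (μ F).toReal * ⨆ f' : Fin (n + 1) → Γ, |c f'|) ∧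
    transfer μ F χ act (delta c) = delta (transfer μ F χ act c) :=
  stmt11_general μ F hFfin χ hχmeas act hactmeas n c hcbdd
end

section
/- Let Γ be a countable group acting freely on measure spaces (X, μ) and (X', μ') by measurable, measure-preserving bijections, with measurable strict fundamental domains F, F' of finite measure and measurable retracts χ, χ'. Let Λ be a group acting on the right on X and on X' by measurable, measure-preserving bijections, each action commuting with the Γ-action. Let (T, ν) and (T', ν') be finite measure spaces. Form Y = (X × T) ⊔ (X' × T') with the sum of the product measures, with Γ acting by γ • (x,t) = (γ • x, t) on each piece and Λ acting by (x,t) · λ = (x · λ, t) on each piece. Then (F × T) ⊔ (F' × T') is a measurable strict fundamental domain for the Γ-action on Y whose retract sends (x,t) in the first piece to χ(x) and (x',t') in the second piece to χ'(x'), and for every bounded Γ-invariant c : Γ^{n+1} → ℝ the transfer cochains satisfy T_Y c(λ₀,…,λ_n) = ν(T) · T_X c(λ₀,…,λ_n) + ν'(T') · T_{X'} c(λ₀,…,λ_n) for all λ₀,…,λ_n ∈ Λ. -/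
/-!
Everything happens piecewise: on `X × T` the `Γ`-action, the retract and the `Λ`-action only see
the first coordinate, so `F × T` is a strict fundamental domain with retract `χ ∘ fst`, and by
Fubini the transfer integrand, which only depends on the `X`-coordinate, integrates over `F × T`
to `ν(T)` times its integral over `F`. The disjoint union adds up the two pieces, where boundedness
of `c` and finiteness of `μ F`, `μ' F'` give the integrability needed to split the integral.
-/

open MeasureTheory Set

def IsStrictFundamentalDomain {Γ Y : Type*} (σ : Γ → Y → Y) (F : Set Y) : Prop :=
  ∀ y, ∃! z, z ∈ F ∧ ∃ γ, σ γ y = z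

namespace IsStrictFundamentalDomain

variable {Γ X T : Type*}

theorem prod_univ {σ : Γ → X → X} {F : Set X} (hF : IsStrictFundamentalDomain σ F) :
    IsStrictFundamentalDomain (fun γ (p : X × T) => (σ γ p.1, p.2)) (F ×ˢ univ) := by
  rintro ⟨x, t⟩
  obtain ⟨_, ⟨hz, γ, rfl⟩, huniq⟩ := hF x
  refine ⟨(σ γ x, t), ⟨⟨hz, trivial⟩, γ, rfl⟩, ?_⟩
  rintro _ ⟨⟨hw, -⟩, γ', rfl⟩
  exact congrArg (·, t) (huniq _ ⟨hw, γ', rfl⟩)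

theorem sum {σ : Γ → X → X} {τ : Γ → T → T} {F : Set X} {G : Set T}
    (hF : IsStrictFundamentalDomain σ F) (hG : IsStrictFundamentalDomain τ G) :
    IsStrictFundamentalDomain (fun γ => Sum.map (σ γ) (τ γ)) (Sum.inl '' F ∪ Sum.inr '' G) := by
  rintro (x | x)
  · obtain ⟨_, ⟨hz, γ, rfl⟩, huniq⟩ := hF x
    refine ⟨Sum.inl (σ γ x), ⟨by simpa using hz, γ, rfl⟩, ?_⟩
    rintro _ ⟨hw, γ', rfl⟩
    exact congrArg Sum.inl (huniq _ ⟨by simpa using hw, γ', rfl⟩)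
  · obtain ⟨_, ⟨hz, γ, rfl⟩, huniq⟩ := hG x
    refine ⟨Sum.inr (τ γ x), ⟨by simpa using hz, γ, rfl⟩, ?_⟩
    rintro _ ⟨hw, γ', rfl⟩
    exact congrArg Sum.inr (huniq _ ⟨by simpa using hw, γ', rfl⟩)

end IsStrictFundamentalDomain

namespace MeasureTheory

variable {α β X T : Type*} {E : Type*} [NormedAddCommGroup E]
  [MeasurableSpace α] [MeasurableSpace β] [MeasurableSpace X] [MeasurableSpace T]

theorem measurableEmbedding_inl : MeasurableEmbedding (Sum.inl : α → α ⊕ β) :=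
  ⟨Sum.inl_injective, measurable_inl, fun _ hs => hs.inl_image⟩

theorem measurableEmbedding_inr : MeasurableEmbedding (Sum.inr : β → α ⊕ β) :=
  ⟨Sum.inr_injective, measurable_inr, fun _ hs => measurableSet_inr_image.2 hs⟩

theorem setIntegral_map_inl_add_map_inr [NormedSpace ℝ E] {μ : Measure α} {ν : Measure β}
    {g : α ⊕ β → E} {s : Set (α ⊕ β)} (hl : IntegrableOn (g ∘ Sum.inl) (Sum.inl ⁻¹' s) μ)
    (hr : IntegrableOn (g ∘ Sum.inr) (Sum.inr ⁻¹' s) ν) :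
    ∫ y in s, g y ∂(μ.map Sum.inl + ν.map Sum.inr) =
      ∫ x in Sum.inl ⁻¹' s, g (Sum.inl x) ∂μ + ∫ x in Sum.inr ⁻¹' s, g (Sum.inr x) ∂ν := by
  rw [Measure.restrict_add, integral_add_measure
      (measurableEmbedding_inl.integrableOn_map_iff.2 hl)
      (measurableEmbedding_inr.integrableOn_map_iff.2 hr),
    measurableEmbedding_inl.setIntegral_map, measurableEmbedding_inr.setIntegral_map]

variable (μ : Measure X) (ν : Measure T) [SFinite ν]

theorem Measure.restrict_prod_eq_prod_univ_of_measurableSet {s : Set X} (hs : MeasurableSet s) :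
    (μ.restrict s).prod ν = (μ.prod ν).restrict (s ×ˢ univ) := by
  classical
  ext E hE
  rw [Measure.restrict_apply hE, Measure.prod_apply hE,
    Measure.prod_apply (hE.inter (hs.prod .univ)), ← lintegral_indicator hs]
  congr 1 with x
  simp only [preimage_inter, mk_preimage_prod_right_eq_if, indicator_apply]
  split_ifs <;> simp

theorem setIntegral_prod_univ_fst [NormedSpace ℝ E] {F : Set X} (hF : MeasurableSet F)
    [SFinite (μ.restrict F)] (G : X → E) : ∫ p in F ×ˢ univ, G p.1 ∂μ.prod ν = ν.real univ • ∫ x in F, G x ∂μ := by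
  rw [← Measure.restrict_prod_eq_prod_univ_of_measurableSet μ ν hF, integral_fun_fst]

theorem IntegrableOn.prod_univ_fst [IsFiniteMeasure ν] {F : Set X} (hF : MeasurableSet F)
    {G : X → E} (hG : IntegrableOn G F μ) :
    IntegrableOn (fun p : X × T => G p.1) (F ×ˢ univ) (μ.prod ν) := by
  rw [IntegrableOn, ← Measure.restrict_prod_eq_prod_univ_of_measurableSet μ ν hF]
  exact hG.comp_fst ν

end MeasureTheory

section Transfer

variable {Γ Λ X ι : Type*} [MeasurableSpace Γ] [MeasurableSpace X]

def transferIntegrand (c : (ι → Γ) → ℝ) (χ : X → Γ) (ρ : X → Λ → X) (f : ι → Λ) (x : X) : ℝ :=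
  c fun j => χ (ρ x (f j))

theorem integrableOn_transferIntegrand [Countable Γ] [MeasurableSingletonClass Γ] [Finite ι]
    {μ : Measure X} {F : Set X} (hF : μ F ≠ ⊤) {c : (ι → Γ) → ℝ} {C : ℝ} (hc : ∀ g, |c g| ≤ C)
    {χ : X → Γ} (hχ : Measurable χ) {ρ : X → Λ → X} (hρ : ∀ l, Measurable fun x => ρ x l)
    (f : ι → Λ) : IntegrableOn (transferIntegrand c χ ρ f) F μ :=
  Measure.integrableOn_of_bounded hF
    ((measurable_of_countable c).comp
      (measurable_pi_lambda _ fun j => hχ.comp (hρ (f j)))).aestronglyMeasurable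
    (ae_of_all _ fun _ => (Real.norm_eq_abs _).trans_le (hc _))

end Transfer

theorem stmt12_general {Γ Λ X X' T T' : Type*} [Group Γ] [Countable Γ]
    [MeasurableSpace Γ] [MeasurableSingletonClass Γ]
    [MulAction Γ X] [MulAction Γ X']
    [MeasurableSpace X] [MeasurableSpace X'] [MeasurableSpace T] [MeasurableSpace T']
    (μ : Measure X) (μ' : Measure X') (ν : Measure T) (ν' : Measure T')
    [IsFiniteMeasure ν] [IsFiniteMeasure ν']
    (F : Set X) (F' : Set X') (hFmeas : MeasurableSet F) (hF'meas : MeasurableSet F')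
    (hFfin : μ F < ⊤) (hF'fin : μ' F' < ⊤)
    (hF : ∀ x : X, ∃! y : X, y ∈ F ∧ ∃ γ : Γ, γ • x = y)
    (hF' : ∀ x : X', ∃! y : X', y ∈ F' ∧ ∃ γ : Γ, γ • x = y)
    (χ : X → Γ) (χ' : X' → Γ) (hχmeas : Measurable χ) (hχ'meas : Measurable χ')
    (hχeq : ∀ (γ : Γ) (x : X), χ (γ • x) = γ * χ x)
    (hχ'eq : ∀ (γ : Γ) (x : X'), χ' (γ • x) = γ * χ' x)
    (hχF : ∀ y ∈ F, χ y = 1) (hχ'F : ∀ y ∈ F', χ' y = 1)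
    (ρ : X → Λ → X) (ρ' : X' → Λ → X')
    (hρmeas : ∀ l : Λ, Measurable fun x : X => ρ x l)
    (hρ'meas : ∀ l : Λ, Measurable fun x : X' => ρ' x l)
    (n : ℕ) (c : (Fin (n + 1) → Γ) → ℝ)
    (C : ℝ) (hc : ∀ f : Fin (n + 1) → Γ, |c f| ≤ C) :
    let Y := (X × T) ⊕ (X' × T')
    let σY : Γ → Y → Y := fun γ =>
      Sum.map (fun p => (γ • p.1, p.2)) (fun p => (γ • p.1, p.2))
    let ρY : Y → Λ → Y := fun y l =>
      Sum.map (fun p => (ρ p.1 l, p.2)) (fun p => (ρ' p.1 l, p.2)) y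
    let χY : Y → Γ := Sum.elim (fun p => χ p.1) (fun p => χ' p.1)
    let FY : Set Y :=
      (Sum.inl '' (F ×ˢ (Set.univ : Set T))) ∪ (Sum.inr '' (F' ×ˢ (Set.univ : Set T')))
    let μY : Measure Y := (μ.prod ν).map Sum.inl + (μ'.prod ν').map Sum.inr
    MeasurableSet FY ∧
    (∀ y : Y, ∃! z : Y, z ∈ FY ∧ ∃ γ : Γ, σY γ y = z) ∧
    (∀ (γ : Γ) (y : Y), χY (σY γ y) = γ * χY y) ∧
    (∀ z ∈ FY, χY z = 1) ∧
    (∀ f : Fin (n + 1) → Λ,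
      ∫ y in FY, c (fun j => χY (ρY y (f j))) ∂μY =
        (ν Set.univ).toReal * ∫ x in F, c (fun j => χ (ρ x (f j))) ∂μ +
        (ν' Set.univ).toReal * ∫ x in F', c (fun j => χ' (ρ' x (f j))) ∂μ') := by
  intro Y σY ρY χY FY μY
  have hFY : IsStrictFundamentalDomain σY FY :=
    .sum (.prod_univ (σ := fun γ x => γ • x) hF) (.prod_univ (σ := fun γ x => γ • x) hF')
  refine ⟨(hFmeas.prod .univ).inl_image.union (measurableSet_inr_image.2 (hF'meas.prod .univ)),
    hFY, ?_, ?_, fun f => ?_⟩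
  · rintro γ (⟨x, t⟩ | ⟨x, t⟩)
    exacts [hχeq γ x, hχ'eq γ x]
  · rintro _ (⟨⟨x, t⟩, ⟨hx, -⟩, rfl⟩ | ⟨⟨x, t⟩, ⟨hx, -⟩, rfl⟩)
    exacts [hχF x hx, hχ'F x hx]
  have hG := integrableOn_transferIntegrand hFfin.ne hc hχmeas hρmeas f
  have hG' := integrableOn_transferIntegrand hF'fin.ne hc hχ'meas hρ'meas f
  have : IsFiniteMeasure (μ.restrict F) := isFiniteMeasure_restrict.2 hFfin.ne
  have : IsFiniteMeasure (μ'.restrict F') := isFiniteMeasure_restrict.2 hF'fin.ne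
  have hFYl : Sum.inl ⁻¹' FY = F ×ˢ univ := by
    rw [preimage_union, preimage_image_eq _ Sum.inl_injective, preimage_inl_image_inr, union_empty]
  have hFYr : Sum.inr ⁻¹' FY = F' ×ˢ univ := by
    rw [preimage_union, preimage_image_eq _ Sum.inr_injective, preimage_inr_image_inl, empty_union]
  rw [setIntegral_map_inl_add_map_inr (by rw [hFYl]; exact hG.prod_univ_fst μ ν hFmeas)
      (by rw [hFYr]; exact hG'.prod_univ_fst μ' ν' hF'meas), hFYl, hFYr]
  exact congrArg₂ (· + ·) (setIntegral_prod_univ_fst μ ν hFmeas (transferIntegrand c χ ρ f))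
    (setIntegral_prod_univ_fst μ' ν' hF'meas (transferIntegrand c χ' ρ' f))

/-- for two couplings `(Γ, X, Λ)`, `(Γ, X', Λ)` and finite measure spaces
`T, T'` with trivial actions, the disjoint union `Y = (X × T) ⊔ (X' × T')` is again a
coupling with fundamental domain `(F × T) ⊔ (F' × T')` and retract induced by `χ, χ'`,
and the transfer cochains satisfy `T_Y c = ν(T) · T_X c + ν'(T') · T_{X'} c`. -/
theorem stmt12 {Γ Λ X X' T T' : Type*} [Group Γ] [Countable Γ]
    [MeasurableSpace Γ] [MeasurableSingletonClass Γ]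
    [Group Λ] [MulAction Γ X] [MulAction Γ X']
    [MeasurableSpace X] [MeasurableSpace X'] [MeasurableSpace T] [MeasurableSpace T']
    (μ : Measure X) (μ' : Measure X') (ν : Measure T) (ν' : Measure T')
    [IsFiniteMeasure ν] [IsFiniteMeasure ν']
    (hΓmeas : ∀ γ : Γ, Measurable fun x : X => γ • x)
    (hΓmeas' : ∀ γ : Γ, Measurable fun x : X' => γ • x)
    (hΓpres : ∀ γ : Γ, MeasurePreserving (fun x : X => γ • x) μ μ)
    (hΓpres' : ∀ γ : Γ, MeasurePreserving (fun x : X' => γ • x) μ' μ')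
    (hfree : ∀ (γ : Γ) (x : X), γ • x = x → γ = 1)
    (hfree' : ∀ (γ : Γ) (x : X'), γ • x = x → γ = 1)
    (F : Set X) (F' : Set X') (hFmeas : MeasurableSet F) (hF'meas : MeasurableSet F')
    (hFfin : μ F < ⊤) (hF'fin : μ' F' < ⊤)
    (hF : ∀ x : X, ∃! y : X, y ∈ F ∧ ∃ γ : Γ, γ • x = y)
    (hF' : ∀ x : X', ∃! y : X', y ∈ F' ∧ ∃ γ : Γ, γ • x = y)
    (χ : X → Γ) (χ' : X' → Γ) (hχmeas : Measurable χ) (hχ'meas : Measurable χ')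
    (hχeq : ∀ (γ : Γ) (x : X), χ (γ • x) = γ * χ x)
    (hχ'eq : ∀ (γ : Γ) (x : X'), χ' (γ • x) = γ * χ' x)
    (hχF : ∀ y ∈ F, χ y = 1) (hχ'F : ∀ y ∈ F', χ' y = 1)
    (ρ : X → Λ → X) (ρ' : X' → Λ → X')
    (hρ_one : ∀ x : X, ρ x 1 = x)
    (hρ_mul : ∀ (x : X) (l m : Λ), ρ x (l * m) = ρ (ρ x l) m)
    (hρ'_one : ∀ x : X', ρ' x 1 = x)
    (hρ'_mul : ∀ (x : X') (l m : Λ), ρ' x (l * m) = ρ' (ρ' x l) m)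
    (hρmeas : ∀ l : Λ, Measurable fun x : X => ρ x l)
    (hρ'meas : ∀ l : Λ, Measurable fun x : X' => ρ' x l)
    (hρpres : ∀ l : Λ, MeasurePreserving (fun x : X => ρ x l) μ μ)
    (hρ'pres : ∀ l : Λ, MeasurePreserving (fun x : X' => ρ' x l) μ' μ')
    (hcomm : ∀ (γ : Γ) (x : X) (l : Λ), ρ (γ • x) l = γ • ρ x l)
    (hcomm' : ∀ (γ : Γ) (x : X') (l : Λ), ρ' (γ • x) l = γ • ρ' x l)
    (n : ℕ) (c : (Fin (n + 1) → Γ) → ℝ)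
    (C : ℝ) (hc : ∀ f : Fin (n + 1) → Γ, |c f| ≤ C)
    (hcinv : ∀ (γ : Γ) (f : Fin (n + 1) → Γ), c (fun j => γ * f j) = c f) :
    let Y := (X × T) ⊕ (X' × T')
    let σY : Γ → Y → Y := fun γ =>
      Sum.map (fun p => (γ • p.1, p.2)) (fun p => (γ • p.1, p.2))
    let ρY : Y → Λ → Y := fun y l =>
      Sum.map (fun p => (ρ p.1 l, p.2)) (fun p => (ρ' p.1 l, p.2)) y
    let χY : Y → Γ := Sum.elim (fun p => χ p.1) (fun p => χ' p.1)
    let FY : Set Y :=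
      (Sum.inl '' (F ×ˢ (Set.univ : Set T))) ∪ (Sum.inr '' (F' ×ˢ (Set.univ : Set T')))
    let μY : Measure Y := (μ.prod ν).map Sum.inl + (μ'.prod ν').map Sum.inr
    MeasurableSet FY ∧
    (∀ y : Y, ∃! z : Y, z ∈ FY ∧ ∃ γ : Γ, σY γ y = z) ∧
    (∀ (γ : Γ) (y : Y), χY (σY γ y) = γ * χY y) ∧
    (∀ z ∈ FY, χY z = 1) ∧
    (∀ f : Fin (n + 1) → Λ,
      ∫ y in FY, c (fun j => χY (ρY y (f j))) ∂μY =
        (ν Set.univ).toReal * ∫ x in F, c (fun j => χ (ρ x (f j))) ∂μ +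
        (ν' Set.univ).toReal * ∫ x in F', c (fun j => χ' (ρ' x (f j))) ∂μ') :=
  stmt12_general μ μ' ν ν' F F' hFmeas hF'meas hFfin hF'fin hF hF' χ χ' hχmeas hχ'meas hχeq hχ'eq
    hχF hχ'F ρ ρ' hρmeas hρ'meas n c C hc
end

section
/- Let Γ, Λ, Π be groups. Let X₁ carry a left Γ-action and a right Λ-action which commute, and let X₂ carry a left Λ-action and a right Π-action which commute. Suppose χ₁ : X₁ → Γ satisfies χ₁(γ • x₁) = γ * χ₁(x₁), χ₂ : X₂ → Λ satisfies χ₂(λ • x₂) = λ * χ₂(x₂), and F₁ ⊆ X₁, F₂ ⊆ X₂ satisfy χ₁ ≡ 1 on F₁ and χ₂ ≡ 1 on F₂. Define χ̃ : X₁ × X₂ → Γ by χ̃(x₁, x₂) = χ₁(x₁ · χ₂(x₂)). Then: (a) χ̃(γ • x₁, x₂) = γ * χ̃(x₁, x₂) for all γ ∈ Γ; (b) χ̃(x₁ · λ⁻¹, λ • x₂) = χ̃(x₁, x₂) for all λ ∈ Λ; (c) χ̃(f₁, f₂) = 1 for all f₁ ∈ F₁, f₂ ∈ F₂. -/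
/-- for couplings `(Γ, X₁, Λ)` and `(Λ, X₂, P)`, the map
`χ̃(x₁, x₂) = χ₁(x₁ · χ₂(x₂))` satisfies: (a) `χ̃(γ • x₁, x₂) = γ * χ̃(x₁, x₂)`;
(b) `χ̃(x₁ · λ⁻¹, λ • x₂) = χ̃(x₁, x₂)`; (c) `χ̃(f₁, f₂) = 1` for `f₁ ∈ F₁, f₂ ∈ F₂`. -/
theorem stmt13 {Γ Λ P X₁ X₂ : Type*} [Group Γ] [Group Λ] [Group P]
    [MulAction Γ X₁] [MulAction Λ X₂]
    (act₁ : X₁ → Λ → X₁)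
    (h₁_one : ∀ x : X₁, act₁ x 1 = x)
    (h₁_mul : ∀ (x : X₁) (l m : Λ), act₁ x (l * m) = act₁ (act₁ x l) m)
    (h₁_comm : ∀ (γ : Γ) (x : X₁) (l : Λ), act₁ (γ • x) l = γ • act₁ x l)
    (act₂ : X₂ → P → X₂)
    (h₂_one : ∀ x : X₂, act₂ x 1 = x)
    (h₂_mul : ∀ (x : X₂) (p q : P), act₂ x (p * q) = act₂ (act₂ x p) q)
    (h₂_comm : ∀ (l : Λ) (x : X₂) (p : P), act₂ (l • x) p = l • act₂ x p)
    (χ₁ : X₁ → Γ) (hχ₁ : ∀ (γ : Γ) (x : X₁), χ₁ (γ • x) = γ * χ₁ x)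
    (χ₂ : X₂ → Λ) (hχ₂ : ∀ (l : Λ) (x : X₂), χ₂ (l • x) = l * χ₂ x)
    (F₁ : Set X₁) (F₂ : Set X₂)
    (hF₁ : ∀ y ∈ F₁, χ₁ y = 1) (hF₂ : ∀ y ∈ F₂, χ₂ y = 1) :
    (∀ (γ : Γ) (x₁ : X₁) (x₂ : X₂),
      χ₁ (act₁ (γ • x₁) (χ₂ x₂)) = γ * χ₁ (act₁ x₁ (χ₂ x₂))) ∧
    (∀ (l : Λ) (x₁ : X₁) (x₂ : X₂),
      χ₁ (act₁ (act₁ x₁ l⁻¹) (χ₂ (l • x₂))) = χ₁ (act₁ x₁ (χ₂ x₂))) ∧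
    (∀ f₁ ∈ F₁, ∀ f₂ ∈ F₂, χ₁ (act₁ f₁ (χ₂ f₂)) = 1) := by
  refine ⟨fun γ x₁ x₂ => by rw [h₁_comm, hχ₁],
    fun l x₁ x₂ => by rw [hχ₂, ← h₁_mul, inv_mul_cancel_left],
    fun f₁ h1 f₂ h2 => by rw [hF₂ f₂ h2, h₁_one, hF₁ f₁ h1]⟩
end

section
/- For i = 1, 2 let Γᵢ be a countable group acting freely on a measure space (Xᵢ, μᵢ) by measurable, measure-preserving bijections, with measurable strict fundamental domain Fᵢ of finite measure and measurable retract χᵢ, and let Λᵢ be a group acting on Xᵢ on the right by measurable, measure-preserving bijections commuting with the Γᵢ-action. Let c₁ : Γ₁^{p+1} → ℝ and c₂ : Γ₂^{q+1} → ℝ be bounded and Γᵢ-invariant, and define their cross product (c₁ × c₂) : (Γ₁ × Γ₂)^{p+q+1} → ℝ by (c₁ × c₂)((γ₀,γ'₀),…,(γ_{p+q},γ'_{p+q})) = c₁(γ₀,…,γ_p) · c₂(γ'_p,…,γ'_{p+q}). Equip X₁ × X₂ with the product measure, the componentwise left Γ₁ × Γ₂-action and the componentwise right Λ₁ × Λ₂-action,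 with fundamental domain F₁ × F₂ and retract (x₁,x₂) ↦ (χ₁(x₁), χ₂(x₂)). Then for all tuples in (Λ₁ × Λ₂)^{p+q+1}: T_{X₁×X₂}(c₁ × c₂)((λ₀,λ'₀),…,(λ_{p+q},λ'_{p+q})) = T_{X₁}c₁(λ₀,…,λ_p) · T_{X₂}c₂(λ'_p,…,λ'_{p+q}). -/
open MeasureTheory

/-- The cross product of cochains `c₁` of degree `p` and `c₂` of degree `q`:
`(c₁ × c₂)((γ₀,γ'₀),…,(γ_{p+q},γ'_{p+q})) = c₁(γ₀,…,γ_p) · c₂(γ'_p,…,γ'_{p+q})`. -/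
def crossCochain {Γ₁ Γ₂ : Type*} {p q : ℕ}
    (c₁ : (Fin (p + 1) → Γ₁) → ℝ) (c₂ : (Fin (q + 1) → Γ₂) → ℝ) :
    (Fin (p + q + 1) → Γ₁ × Γ₂) → ℝ :=
  fun f =>
    c₁ (fun i => (f ⟨(i : ℕ), by have := i.isLt; omega⟩).1) *
    c₂ (fun i => (f ⟨p + (i : ℕ), by have := i.isLt; omega⟩).2)

/-- the transfer over a product coupling of a cross product of cochains is
the cross product of the transfers:
`T_{X₁×X₂}(c₁ × c₂)((λ₀,λ'₀),…) = T_{X₁}c₁(λ₀,…,λ_p) · T_{X₂}c₂(λ'_p,…,λ'_{p+q})`. -/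
theorem stmt15 {Γ₁ Γ₂ Λ₁ Λ₂ X₁ X₂ : Type*}
    [Group Γ₁] [Group Γ₂] [Countable Γ₁] [Countable Γ₂]
    [MeasurableSpace Γ₁] [MeasurableSingletonClass Γ₁]
    [MeasurableSpace Γ₂] [MeasurableSingletonClass Γ₂]
    [Group Λ₁] [Group Λ₂] [MulAction Γ₁ X₁] [MulAction Γ₂ X₂]
    [MeasurableSpace X₁] [MeasurableSpace X₂]
    (μ₁ : Measure X₁) (μ₂ : Measure X₂) [SigmaFinite μ₁] [SigmaFinite μ₂]
    (hΓmeas₁ : ∀ γ : Γ₁, Measurable fun x : X₁ => γ • x)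
    (hΓmeas₂ : ∀ γ : Γ₂, Measurable fun x : X₂ => γ • x)
    (hΓpres₁ : ∀ γ : Γ₁, MeasurePreserving (fun x : X₁ => γ • x) μ₁ μ₁)
    (hΓpres₂ : ∀ γ : Γ₂, MeasurePreserving (fun x : X₂ => γ • x) μ₂ μ₂)
    (hfree₁ : ∀ (γ : Γ₁) (x : X₁), γ • x = x → γ = 1)
    (hfree₂ : ∀ (γ : Γ₂) (x : X₂), γ • x = x → γ = 1)
    (F₁ : Set X₁) (F₂ : Set X₂)
    (hF₁meas : MeasurableSet F₁) (hF₂meas : MeasurableSet F₂)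
    (hF₁fin : μ₁ F₁ < ⊤) (hF₂fin : μ₂ F₂ < ⊤)
    (hF₁ : ∀ x : X₁, ∃! y : X₁, y ∈ F₁ ∧ ∃ γ : Γ₁, γ • x = y)
    (hF₂ : ∀ x : X₂, ∃! y : X₂, y ∈ F₂ ∧ ∃ γ : Γ₂, γ • x = y)
    (χ₁ : X₁ → Γ₁) (χ₂ : X₂ → Γ₂) (hχ₁meas : Measurable χ₁) (hχ₂meas : Measurable χ₂)
    (hχ₁eq : ∀ (γ : Γ₁) (x : X₁), χ₁ (γ • x) = γ * χ₁ x)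
    (hχ₂eq : ∀ (γ : Γ₂) (x : X₂), χ₂ (γ • x) = γ * χ₂ x)
    (hχ₁F : ∀ y ∈ F₁, χ₁ y = 1) (hχ₂F : ∀ y ∈ F₂, χ₂ y = 1)
    (ρ₁ : X₁ → Λ₁ → X₁) (ρ₂ : X₂ → Λ₂ → X₂)
    (hρ₁_one : ∀ x : X₁, ρ₁ x 1 = x)
    (hρ₁_mul : ∀ (x : X₁) (l m : Λ₁), ρ₁ x (l * m) = ρ₁ (ρ₁ x l) m)
    (hρ₂_one : ∀ x : X₂, ρ₂ x 1 = x)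
    (hρ₂_mul : ∀ (x : X₂) (l m : Λ₂), ρ₂ x (l * m) = ρ₂ (ρ₂ x l) m)
    (hρ₁meas : ∀ l : Λ₁, Measurable fun x : X₁ => ρ₁ x l)
    (hρ₂meas : ∀ l : Λ₂, Measurable fun x : X₂ => ρ₂ x l)
    (hρ₁pres : ∀ l : Λ₁, MeasurePreserving (fun x : X₁ => ρ₁ x l) μ₁ μ₁)
    (hρ₂pres : ∀ l : Λ₂, MeasurePreserving (fun x : X₂ => ρ₂ x l) μ₂ μ₂)
    (hcomm₁ : ∀ (γ : Γ₁) (x : X₁) (l : Λ₁), ρ₁ (γ • x) l = γ • ρ₁ x l)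
    (hcomm₂ : ∀ (γ : Γ₂) (x : X₂) (l : Λ₂), ρ₂ (γ • x) l = γ • ρ₂ x l)
    (p q : ℕ) (c₁ : (Fin (p + 1) → Γ₁) → ℝ) (c₂ : (Fin (q + 1) → Γ₂) → ℝ)
    (C₁ C₂ : ℝ) (hc₁ : ∀ f, |c₁ f| ≤ C₁) (hc₂ : ∀ f, |c₂ f| ≤ C₂)
    (hc₁inv : ∀ (γ : Γ₁) (f : Fin (p + 1) → Γ₁), c₁ (fun j => γ * f j) = c₁ f)
    (hc₂inv : ∀ (γ : Γ₂) (f : Fin (q + 1) → Γ₂), c₂ (fun j => γ * f j) = c₂ f) :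
    ∀ f : Fin (p + q + 1) → Λ₁ × Λ₂,
      ∫ z in F₁ ×ˢ F₂,
          crossCochain c₁ c₂
            (fun j => (χ₁ (ρ₁ z.1 (f j).1), χ₂ (ρ₂ z.2 (f j).2))) ∂(μ₁.prod μ₂) =
        (∫ x in F₁,
            c₁ (fun i => χ₁ (ρ₁ x ((f ⟨(i : ℕ), by have := i.isLt; omega⟩).1))) ∂μ₁) *
        (∫ x in F₂,
            c₂ (fun i => χ₂ (ρ₂ x ((f ⟨p + (i : ℕ), by have := i.isLt; omega⟩).2))) ∂μ₂) := by
  intro f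
  unfold crossCochain
  rw [← Measure.prod_restrict]
  exact MeasureTheory.integral_prod_mul
    (fun x => c₁ fun i => χ₁ (ρ₁ x ((f ⟨(i : ℕ), by have := i.isLt; omega⟩).1)))
    (fun y => c₂ fun i => χ₂ (ρ₂ y ((f ⟨p + (i : ℕ), by have := i.isLt; omega⟩).2)))
end

section
/- Let Γ be a countable group acting freely on a measure space (X, μ) by measurable, measure-preserving bijections, let F be a measurable strict fundamental domain with μ(F) < ∞, and let χ : X → Γ be its measurable retract. Let ρ and ρ' be two right actions of a group Λ on X, each by measurable, measure-preserving bijections and each commuting with the Γ-action. Let c : Γ^{n+1} → ℝ be bounded and Γ-invariant, and write T_ρ c and T_{ρ'} c for the corresponding transfer cochains. Then for all λ₀,…,λ_n ∈ Λ, writing D = {x ∈ F : ρ(λᵢ)(x) ≠ ρ'(λᵢ)(x) for some 0 ≤ i ≤ n} and assuming D is measurable, one has |T_ρ c(λ₀,…,λ_n) − T_{ρ'} c(λ₀,…,λ_n)| ≤ 2 · (sup|c|) · μ(D). -/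
/-!
Both transfer integrands are bounded by `sup |c|`, and they agree at every point of `F` outside
`D`, because there the two actions send `x` to the same points and the retract is applied to the
same arguments. So the difference of the two integrals over `F` is an integral over `D` of a
function bounded by `2 sup |c|`.
-/

open MeasureTheory

section

variable {X : Type*} [MeasurableSpace X] {μ : Measure X}

theorem abs_setIntegral_sub_setIntegral_le_of_eqOn_sdiff {f g : X → ℝ} {s t : Set X} {M : ℝ}
    (hs : MeasurableSet s) (hμs : μ s < ⊤) (hts : t ⊆ s)
    (hf : Measurable f) (hg : Measurable g) (hfM : ∀ x, |f x| ≤ M) (hgM : ∀ x, |g x| ≤ M)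
    (hfg : ∀ x ∈ s \ t, f x = g x) :
    |(∫ x in s, f x ∂μ) - ∫ x in s, g x ∂μ| ≤ 2 * M * μ.real t := by
  have hf_int : IntegrableOn f s μ :=
    Measure.integrableOn_of_bounded hμs.ne hf.aestronglyMeasurable (ae_of_all _ hfM)
  have hg_int : IntegrableOn g s μ :=
    Measure.integrableOn_of_bounded hμs.ne hg.aestronglyMeasurable (ae_of_all _ hgM)
  have h_diff_bound : ∀ x ∈ t, ‖f x - g x‖ ≤ 2 * M := fun x _ =>
    calc ‖f x - g x‖ ≤ |f x| + |g x| := norm_sub_le _ _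
      _ ≤ 2 * M := by linarith [hfM x, hgM x]
  calc |(∫ x in s, f x ∂μ) - ∫ x in s, g x ∂μ|
      = ‖∫ x in t, (f x - g x) ∂μ‖ := by
        rw [← integral_sub hf_int hg_int, setIntegral_eq_of_subset_of_forall_sdiff_eq_zero hs hts
          fun x hx => sub_eq_zero.2 (hfg x hx), Real.norm_eq_abs]
    _ ≤ 2 * M * μ.real t :=
        norm_setIntegral_le_of_norm_le_const ((measure_mono hts).trans_lt hμs) h_diff_bound

end

theorem stmt16_general {Γ Λ X : Type*} [Countable Γ]
    [MeasurableSpace Γ] [MeasurableSingletonClass Γ]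
    [MeasurableSpace X] (μ : Measure X)
    (F : Set X) (hFmeas : MeasurableSet F) (hFfin : μ F < ⊤)
    (χ : X → Γ) (hχmeas : Measurable χ)
    (ρ ρ' : X → Λ → X)
    (hρmeas : ∀ l : Λ, Measurable fun x : X => ρ x l)
    (hρ'meas : ∀ l : Λ, Measurable fun x : X => ρ' x l)
    (n : ℕ) (c : (Fin (n + 1) → Γ) → ℝ)
    (hcbdd : BddAbove (Set.range fun f : Fin (n + 1) → Γ => |c f|)) :
    ∀ f : Fin (n + 1) → Λ,
      MeasurableSet {x | x ∈ F ∧ ∃ i : Fin (n + 1), ρ x (f i) ≠ ρ' x (f i)} →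
      |(∫ x in F, c (fun j => χ (ρ x (f j))) ∂μ) -
          ∫ x in F, c (fun j => χ (ρ' x (f j))) ∂μ| ≤
        2 * (⨆ f' : Fin (n + 1) → Γ, |c f'|) *
          (μ {x | x ∈ F ∧ ∃ i : Fin (n + 1), ρ x (f i) ≠ ρ' x (f i)}).toReal := by
  intro f _
  have hc_le : ∀ f' : Fin (n + 1) → Γ, |c f'| ≤ ⨆ f', |c f'| := le_ciSup hcbdd
  have h_integrand_meas : ∀ σ : X → Λ → X, (∀ l, Measurable fun x => σ x l) →
      Measurable fun x => c fun j => χ (σ x (f j)) := fun σ hσ =>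
    (measurable_of_countable c).comp (measurable_pi_lambda _ fun j => hχmeas.comp (hσ (f j)))
  refine abs_setIntegral_sub_setIntegral_le_of_eqOn_sdiff hFmeas hFfin (fun x hx => hx.1)
    (h_integrand_meas ρ hρmeas) (h_integrand_meas ρ' hρ'meas) (fun _ => hc_le _)
    (fun _ => hc_le _) fun x ⟨hxF, hxD⟩ => ?_
  have h_agree : ∀ i, ρ x (f i) = ρ' x (f i) := fun i => not_not.1 fun h => hxD ⟨hxF, i, h⟩
  simp only [h_agree]

/-- for two right `Λ`-actions `ρ, ρ'` on the same coupling and a bounded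
`Γ`-invariant cochain `c : Γ^{n+1} → ℝ`, the transfer cochains satisfy
`|T_ρ c(λ₀,…,λ_n) − T_{ρ'} c(λ₀,…,λ_n)| ≤ 2 · sup|c| · μ(D)`, where
`D = {x ∈ F : ρ(λᵢ)(x) ≠ ρ'(λᵢ)(x) for some i}` (assumed measurable). -/
theorem stmt16 {Γ Λ X : Type*} [Group Γ] [Countable Γ]
    [MeasurableSpace Γ] [MeasurableSingletonClass Γ]
    [Group Λ] [MulAction Γ X] [MeasurableSpace X] (μ : Measure X)
    (hΓmeas : ∀ γ : Γ, Measurable fun x : X => γ • x)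
    (hΓpres : ∀ γ : Γ, MeasurePreserving (fun x : X => γ • x) μ μ)
    (hfree : ∀ (γ : Γ) (x : X), γ • x = x → γ = 1)
    (F : Set X) (hFmeas : MeasurableSet F) (hFfin : μ F < ⊤)
    (hF : ∀ x : X, ∃! y : X, y ∈ F ∧ ∃ γ : Γ, γ • x = y)
    (χ : X → Γ) (hχmeas : Measurable χ)
    (hχeq : ∀ (γ : Γ) (x : X), χ (γ • x) = γ * χ x) (hχF : ∀ y ∈ F, χ y = 1)
    (ρ ρ' : X → Λ → X)
    (hρ_one : ∀ x : X, ρ x 1 = x)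
    (hρ_mul : ∀ (x : X) (l m : Λ), ρ x (l * m) = ρ (ρ x l) m)
    (hρ'_one : ∀ x : X, ρ' x 1 = x)
    (hρ'_mul : ∀ (x : X) (l m : Λ), ρ' x (l * m) = ρ' (ρ' x l) m)
    (hρmeas : ∀ l : Λ, Measurable fun x : X => ρ x l)
    (hρ'meas : ∀ l : Λ, Measurable fun x : X => ρ' x l)
    (hρpres : ∀ l : Λ, MeasurePreserving (fun x : X => ρ x l) μ μ)
    (hρ'pres : ∀ l : Λ, MeasurePreserving (fun x : X => ρ' x l) μ μ)
    (hcomm : ∀ (γ : Γ) (x : X) (l : Λ), ρ (γ • x) l = γ • ρ x l)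
    (hcomm' : ∀ (γ : Γ) (x : X) (l : Λ), ρ' (γ • x) l = γ • ρ' x l)
    (n : ℕ) (c : (Fin (n + 1) → Γ) → ℝ)
    (hcbdd : BddAbove (Set.range fun f : Fin (n + 1) → Γ => |c f|))
    (hcinv : ∀ (γ : Γ) (f : Fin (n + 1) → Γ), c (fun j => γ * f j) = c f) :
    ∀ f : Fin (n + 1) → Λ,
      MeasurableSet {x | x ∈ F ∧ ∃ i : Fin (n + 1), ρ x (f i) ≠ ρ' x (f i)} →
      |(∫ x in F, c (fun j => χ (ρ x (f j))) ∂μ) -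
          ∫ x in F, c (fun j => χ (ρ' x (f j))) ∂μ| ≤
        2 * (⨆ f' : Fin (n + 1) → Γ, |c f'|) *
          (μ {x | x ∈ F ∧ ∃ i : Fin (n + 1), ρ x (f i) ≠ ρ' x (f i)}).toReal :=
  stmt16_general μ F hFmeas hFfin χ hχmeas ρ ρ' hρmeas hρ'meas n c hcbdd
end
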